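/- arXiv:2112.01744 — 4 statements merged into one kernel-verified Lean document; each statement's English description precedes it below -/
import Mathlib

section
/- Let x lie in the open unit disk of ℝ² and let v ∈ ℝ² with v ≠ 0. Then v·x_b(x,v) < 0, the functions t_b and x_b are differentiable at (x,v), and, writing t_b = t_b(x,v) and x_b = x_b(x,v), their derivatives are: ∇_x t_b = x_b/(v·x_b), ∇_v t_b = −t_b·x_b/(v·x_b), ∇_x x_b = I − (v⊗x_b)/(v·x_b), and ∇_v x_b = −t_b·(I − (v⊗x_b)/(v·x_b)). -/
/-!
For `‖x‖ < 1` and `v ≠ 0` the exit time is the larger root of the quadratic `‖x - s • v‖ = 1`,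
`tb = (⟪x, v⟫ + √Δ) / ‖v‖²` with `Δ = ⟪x, v⟫² + ‖v‖² (1 - ‖x‖²) > 0`; hence `tb` is differentiable
and `⟪v, xb⟫ = -√Δ < 0`. Since `‖xb‖ = 1` on a neighbourhood of `(x, v)`, the derivative of
`xb = x - tb • v` is orthogonal to `xb`, and solving this for the derivative of `tb` gives its
formula; the derivative of `xb` then follows from the product rule.
-/

noncomputable section

open Matrix Real Set

/-- The Euclidean plane ℝ². -/
abbrev E : Type := EuclideanSpace ℝ (Fin 2)

/-- Dot product on ℝ². -/
def dot (a b : E) : ℝ := a 0 * b 0 + a 1 * b 1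

/-- Build a vector of ℝ² from its components. -/
def toE (f : Fin 2 → ℝ) : E := (WithLp.equiv 2 (Fin 2 → ℝ)).symm f

/-- Tensor (outer) product a⊗b, (a⊗b)_{ij} = aᵢ bⱼ. -/
def outer (a b : E) : Matrix (Fin 2) (Fin 2) ℝ := Matrix.of fun i j => a i * b j

/-- Matrix acting on a column vector. -/
def mulV (M : Matrix (Fin 2) (Fin 2) ℝ) (v : E) : E := toE fun i => M i 0 * v 0 + M i 1 * v 1

/-- Row vector multiplied by a matrix on the right. -/
def vMulM (w : E) (M : Matrix (Fin 2) (Fin 2) ℝ) : E := toE fun j => w 0 * M 0 j + w 1 * M 1 j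

/-- Specular reflection matrix R_n = I - 2 n⊗n. -/
def Rmat (n : E) : Matrix (Fin 2) (Fin 2) ℝ := 1 - (2 : ℝ) • outer n n

/-- The matrix A_{v,n} = ((v·n) I + n⊗v)(I - (v⊗n)/(v·n)). -/
def Amat (v n : E) : Matrix (Fin 2) (Fin 2) ℝ :=
  (dot v n • (1 : Matrix (Fin 2) (Fin 2) ℝ) + outer n v) *
    (1 - (dot v n)⁻¹ • outer v n)

/-- Counterclockwise rotation by π/2. -/
def Qmat : Matrix (Fin 2) (Fin 2) ℝ := !![0, -1; 1, 0]

/-- Backward exit time from the closed unit disk. -/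
def tb (x v : E) : ℝ := sSup {s : ℝ | 0 ≤ s ∧ ‖x - s • v‖ ≤ 1}

/-- Backward exit point from the closed unit disk. -/
def xb (x v : E) : E := x - tb x v • v

/-- The i-th column of a 2×2 matrix, as a vector of ℝ². -/
def colE (M : Matrix (Fin 2) (Fin 2) ℝ) (i : Fin 2) : E := toE fun k => M k i

/-- A 2×2 matrix as a continuous linear map ℝ² → ℝ². -/
def toCLM (M : Matrix (Fin 2) (Fin 2) ℝ) : E →L[ℝ] E :=
  LinearMap.toContinuousLinearMap (Matrix.toEuclideanLin M)

open RealInnerProductSpace Topology Filter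

theorem HasFDerivAt.inner_apply_eq_zero_of_eventually_norm_eq
    {G F : Type*} [NormedAddCommGroup G] [NormedSpace ℝ G]
    [NormedAddCommGroup F] [InnerProductSpace ℝ F]
    {φ : G → F} {φ' : G →L[ℝ] F} {p : G} {c : ℝ}
    (hφ : HasFDerivAt φ φ' p) (hc : ∀ᶠ y in 𝓝 p, ‖φ y‖ = c) (h : G) : ⟪φ p, φ' h⟫ = 0 := by
  have hconst : HasFDerivAt (‖φ ·‖ ^ 2) (0 : G →L[ℝ] ℝ) p :=
    (hasFDerivAt_const (c ^ 2) p).congr_of_eventuallyEq (hc.mono fun y hy => by simp [hy])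
  simpa using congrArg (· h) (hφ.norm_sq.unique hconst)

section ExitRoot

variable {F : Type*} [NormedAddCommGroup F] [InnerProductSpace ℝ F] {x v : F}

def exitDiscr (x v : F) : ℝ := ⟪x, v⟫ ^ 2 + ‖v‖ ^ 2 * (1 - ‖x‖ ^ 2)

def exitRoot (x v : F) : ℝ := (⟪x, v⟫ + √(exitDiscr x v)) / ‖v‖ ^ 2

theorem sq_norm_mul_sq_norm_sub_smul_sub_one (x v : F) (s : ℝ) :
    ‖v‖ ^ 2 * (‖x - s • v‖ ^ 2 - 1) = (‖v‖ ^ 2 * s - ⟪x, v⟫) ^ 2 - exitDiscr x v := by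
  rw [norm_sub_sq_real, real_inner_smul_right, norm_smul, Real.norm_eq_abs, mul_pow, sq_abs,
    exitDiscr]
  ring

theorem sq_inner_lt_exitDiscr (hx : ‖x‖ < 1) (hv : v ≠ 0) : ⟪x, v⟫ ^ 2 < exitDiscr x v := by
  have : ‖x‖ ^ 2 < 1 := by nlinarith [norm_nonneg x]
  have : 0 < ‖v‖ ^ 2 * (1 - ‖x‖ ^ 2) := mul_pos (by positivity) (by linarith)
  unfold exitDiscr
  linarith

theorem exitDiscr_pos (hx : ‖x‖ < 1) (hv : v ≠ 0) : 0 < exitDiscr x v :=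
  (sq_nonneg _).trans_lt (sq_inner_lt_exitDiscr hx hv)

theorem abs_inner_lt_sqrt_exitDiscr (hx : ‖x‖ < 1) (hv : v ≠ 0) :
    |⟪x, v⟫| < √(exitDiscr x v) := by
  rw [← Real.sqrt_sq_eq_abs]
  exact Real.sqrt_lt_sqrt (sq_nonneg _) (sq_inner_lt_exitDiscr hx hv)

theorem norm_sub_smul_le_one_iff (hx : ‖x‖ < 1) (hv : v ≠ 0) {s : ℝ} (hs : 0 ≤ s) :
    ‖x - s • v‖ ≤ 1 ↔ s ≤ exitRoot x v := by
  have hv2 : 0 < ‖v‖ ^ 2 := by positivity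
  have hroot := abs_inner_lt_sqrt_exitDiscr hx hv
  rw [← sq_le_one_iff₀ (norm_nonneg _), ← sub_nonpos, ← smul_nonpos_iff_nonpos_of_pos_left hv2,
    smul_eq_mul, sq_norm_mul_sq_norm_sub_smul_sub_one, sub_nonpos, Real.sq_le (exitDiscr_pos hx hv).le,
    exitRoot, le_div_iff₀ hv2]
  have : ⟪x, v⟫ - √(exitDiscr x v) ≤ ‖v‖ ^ 2 * s := by
    linarith [le_abs_self ⟪x, v⟫, mul_nonneg hv2.le hs]
  constructor
  · intro h; linarith [h.2]
  · intro h; constructor <;> linarith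

theorem exitRoot_pos (hx : ‖x‖ < 1) (hv : v ≠ 0) : 0 < exitRoot x v := by
  have hroot := abs_inner_lt_sqrt_exitDiscr hx hv
  have : 0 < ⟪x, v⟫ + √(exitDiscr x v) := by linarith [neg_abs_le ⟪x, v⟫]
  exact div_pos this (by positivity)

theorem norm_sub_exitRoot_smul (hv : v ≠ 0) (hΔ : 0 ≤ exitDiscr x v) :
    ‖x - exitRoot x v • v‖ = 1 := by
  have hv2 : ‖v‖ ^ 2 ≠ 0 := by positivity
  have key := sq_norm_mul_sq_norm_sub_smul_sub_one x v (exitRoot x v)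
  rw [exitRoot, mul_div_cancel₀ _ hv2, add_sub_cancel_left, Real.sq_sqrt hΔ, sub_self] at key
  have := (mul_eq_zero.mp key).resolve_left hv2
  exact (pow_eq_one_iff_of_nonneg (norm_nonneg _) two_ne_zero).mp (sub_eq_zero.mp this)

theorem inner_sub_exitRoot_smul (hv : v ≠ 0) :
    ⟪v, x - exitRoot x v • v⟫ = -√(exitDiscr x v) := by
  have hv2 : ‖v‖ ^ 2 ≠ 0 := by positivity
  rw [inner_sub_right, real_inner_smul_right, real_inner_self_eq_norm_sq, exitRoot,
    div_mul_cancel₀ _ hv2, real_inner_comm]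
  ring

theorem differentiableAt_exitRoot (hx : ‖x‖ < 1) (hv : v ≠ 0) :
    DifferentiableAt ℝ (fun p : F × F => exitRoot p.1 p.2) (x, v) := by
  have hv2 : ‖v‖ ^ 2 ≠ 0 := by positivity
  have hΔ : exitDiscr x v ≠ 0 := (exitDiscr_pos hx hv).ne'
  have hinner : DifferentiableAt ℝ (fun p : F × F => ⟪p.1, p.2⟫) (x, v) :=
    differentiableAt_fst.inner ℝ differentiableAt_snd
  have hΔ' : DifferentiableAt ℝ (fun p : F × F => exitDiscr p.1 p.2) (x, v) :=
    (hinner.pow 2).add ((differentiableAt_snd.norm_sq ℝ).mul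
      ((differentiableAt_const _).sub (differentiableAt_fst.norm_sq ℝ)))
  simp only [exitRoot, div_eq_mul_inv]
  exact (hinner.add (hΔ'.sqrt hΔ)).mul ((differentiableAt_snd.norm_sq ℝ).inv hv2)

end ExitRoot

section Disk

variable {x v : E}

theorem dot_eq_inner (a b : E) : dot a b = ⟪a, b⟫ := by
  simp [dot, PiLp.inner_apply, Fin.sum_univ_two, mul_comm]

theorem toCLM_one_sub_smul_outer (c : ℝ) (a b : E) :
    toCLM (1 - c • outer a b) = ContinuousLinearMap.id ℝ E - c • (innerSL ℝ b).smulRight a := by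
  ext w i
  fin_cases i <;> simp [toCLM, outer, Fin.sum_univ_two, PiLp.inner_apply] <;> ring

theorem toCLM_smul (c : ℝ) (M : Matrix (Fin 2) (Fin 2) ℝ) : toCLM (c • M) = c • toCLM M := by
  ext
  simp [toCLM]

theorem tb_eq_exitRoot (hx : ‖x‖ < 1) (hv : v ≠ 0) : tb x v = exitRoot x v := by
  have : {s : ℝ | 0 ≤ s ∧ ‖x - s • v‖ ≤ 1} = Icc 0 (exitRoot x v) := by
    ext s
    exact and_congr_right (norm_sub_smul_le_one_iff hx hv)
  rw [tb, this, csSup_Icc (exitRoot_pos hx hv).le]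

theorem eventually_norm_fst_lt_one_and_snd_ne_zero (hx : ‖x‖ < 1) (hv : v ≠ 0) :
    ∀ᶠ p : E × E in 𝓝 (x, v), ‖p.1‖ < 1 ∧ p.2 ≠ 0 :=
  ((isOpen_lt (continuous_norm.comp continuous_fst) continuous_const).inter
    (isOpen_ne.preimage continuous_snd)).mem_nhds ⟨hx, hv⟩

theorem tb_eventuallyEq_exitRoot (hx : ‖x‖ < 1) (hv : v ≠ 0) :
    (fun p : E × E => tb p.1 p.2) =ᶠ[𝓝 (x, v)] fun p => exitRoot p.1 p.2 :=
  (eventually_norm_fst_lt_one_and_snd_ne_zero hx hv).mono fun _ hp => tb_eq_exitRoot hp.1 hp.2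

theorem norm_xb (hx : ‖x‖ < 1) (hv : v ≠ 0) : ‖xb x v‖ = 1 := by
  rw [xb, tb_eq_exitRoot hx hv, norm_sub_exitRoot_smul hv (exitDiscr_pos hx hv).le]

theorem inner_xb (hx : ‖x‖ < 1) (hv : v ≠ 0) : ⟪v, xb x v⟫ = -√(exitDiscr x v) := by
  rw [xb, tb_eq_exitRoot hx hv, inner_sub_exitRoot_smul hv]

theorem inner_xb_neg (hx : ‖x‖ < 1) (hv : v ≠ 0) : ⟪v, xb x v⟫ < 0 := by
  rw [inner_xb hx hv, neg_lt_zero]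
  exact Real.sqrt_pos.mpr (exitDiscr_pos hx hv)

theorem differentiableAt_tb (hx : ‖x‖ < 1) (hv : v ≠ 0) :
    DifferentiableAt ℝ (fun p : E × E => tb p.1 p.2) (x, v) :=
  (differentiableAt_exitRoot hx hv).congr_of_eventuallyEq (tb_eventuallyEq_exitRoot hx hv)

theorem hasFDerivAt_xb_of_hasFDerivAt_tb {D : E × E →L[ℝ] ℝ}
    (hD : HasFDerivAt (fun p : E × E => tb p.1 p.2) D (x, v)) :
    HasFDerivAt (fun p : E × E => xb p.1 p.2)
      (ContinuousLinearMap.fst ℝ E E - (tb x v • ContinuousLinearMap.snd ℝ E E + D.smulRight v))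
      (x, v) :=
  hasFDerivAt_fst.sub (hD.fun_smul hasFDerivAt_snd)

theorem hasFDerivAt_tb (hx : ‖x‖ < 1) (hv : v ≠ 0) :
    HasFDerivAt (fun p : E × E => tb p.1 p.2)
      ((⟪v, xb x v⟫)⁻¹ • (innerSL ℝ (xb x v)).comp
        (ContinuousLinearMap.fst ℝ E E - tb x v • ContinuousLinearMap.snd ℝ E E)) (x, v) := by
  have hD := (differentiableAt_tb hx hv).hasFDerivAt
  have htangent := (hasFDerivAt_xb_of_hasFDerivAt_tb hD).inner_apply_eq_zero_of_eventually_norm_eq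
    ((eventually_norm_fst_lt_one_and_snd_ne_zero hx hv).mono fun _ hp => norm_xb hp.1 hp.2)
  refine hD.congr_fderiv (ContinuousLinearMap.ext fun p => ?_)
  have hp := htangent p
  have hne := (inner_xb_neg hx hv).ne
  simp only [_root_.sub_apply, _root_.add_apply, _root_.smul_apply,
    ContinuousLinearMap.smulRight_apply, ContinuousLinearMap.coe_fst', ContinuousLinearMap.coe_snd',
    inner_sub_right, inner_add_right, real_inner_smul_right] at hp
  simp only [_root_.smul_apply, ContinuousLinearMap.comp_apply, _root_.sub_apply,
    ContinuousLinearMap.coe_fst', ContinuousLinearMap.coe_snd', innerSL_apply_apply, smul_eq_mul,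
    inner_sub_right, real_inner_smul_right]
  rw [eq_inv_mul_iff_mul_eq₀ hne, ← real_inner_comm v]
  linarith

theorem hasFDerivAt_xb (hx : ‖x‖ < 1) (hv : v ≠ 0) :
    HasFDerivAt (fun p : E × E => xb p.1 p.2)
      (ContinuousLinearMap.fst ℝ E E - (tb x v • ContinuousLinearMap.snd ℝ E E +
        ((⟪v, xb x v⟫)⁻¹ • (innerSL ℝ (xb x v)).comp
          (ContinuousLinearMap.fst ℝ E E - tb x v • ContinuousLinearMap.snd ℝ E E)).smulRight v))
      (x, v) :=
  hasFDerivAt_xb_of_hasFDerivAt_tb (hasFDerivAt_tb hx hv)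

theorem hasGradientAt_tb_left (hx : ‖x‖ < 1) (hv : v ≠ 0) :
    HasGradientAt (fun y => tb y v) ((⟪v, xb x v⟫)⁻¹ • xb x v) x := by
  rw [hasGradientAt_iff_hasFDerivAt]
  have h := (hasFDerivAt_tb hx hv).comp (f := fun y : E => (y, v)) x
    (hasFDerivAt_prodMk_left x v)
  refine h.congr_fderiv ?_
  ext k
  simp

theorem hasGradientAt_tb_right (hx : ‖x‖ < 1) (hv : v ≠ 0) :
    HasGradientAt (fun w => tb x w) (-((tb x v * (⟪v, xb x v⟫)⁻¹) • xb x v)) v := by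
  rw [hasGradientAt_iff_hasFDerivAt]
  have h := (hasFDerivAt_tb hx hv).comp v (hasFDerivAt_prodMk_right x v)
  refine h.congr_fderiv ?_
  ext k
  simp [mul_assoc, mul_left_comm]

theorem hasFDerivAt_xb_left (hx : ‖x‖ < 1) (hv : v ≠ 0) :
    HasFDerivAt (fun y => xb y v) (toCLM (1 - (⟪v, xb x v⟫)⁻¹ • outer v (xb x v))) x := by
  have h := (hasFDerivAt_xb hx hv).comp (f := fun y : E => (y, v)) x
    (hasFDerivAt_prodMk_left x v)
  refine h.congr_fderiv ?_
  rw [toCLM_one_sub_smul_outer]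
  refine ContinuousLinearMap.ext fun k => ?_
  simp [smul_sub, smul_smul, mul_comm]

theorem hasFDerivAt_xb_right (hx : ‖x‖ < 1) (hv : v ≠ 0) :
    HasFDerivAt (fun w => xb x w)
      (toCLM ((-(tb x v)) • (1 - (⟪v, xb x v⟫)⁻¹ • outer v (xb x v)))) v := by
  have h := (hasFDerivAt_xb hx hv).comp v (hasFDerivAt_prodMk_right x v)
  refine h.congr_fderiv ?_
  rw [toCLM_smul, toCLM_one_sub_smul_outer]
  refine ContinuousLinearMap.ext fun k => ?_
  simp [smul_sub, smul_smul, mul_comm, add_comm]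

end Disk

/-- derivatives of the backward exit time and exit point. -/
theorem stmt0 (x v : E) (hx : ‖x‖ < 1) (hv : v ≠ 0) :
    dot v (xb x v) < 0 ∧
    DifferentiableAt ℝ (fun p : E × E => tb p.1 p.2) (x, v) ∧
    DifferentiableAt ℝ (fun p : E × E => xb p.1 p.2) (x, v) ∧
    gradient (fun y => tb y v) x = (dot v (xb x v))⁻¹ • xb x v ∧
    gradient (fun w => tb x w) v = -((tb x v * (dot v (xb x v))⁻¹) • xb x v) ∧
    HasFDerivAt (fun y => xb y v)
      (toCLM (1 - (dot v (xb x v))⁻¹ • outer v (xb x v))) x ∧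
    HasFDerivAt (fun w => xb x w)
      (toCLM ((-(tb x v)) • (1 - (dot v (xb x v))⁻¹ • outer v (xb x v)))) v := by
  rw [dot_eq_inner]
  exact ⟨inner_xb_neg hx hv, (hasFDerivAt_tb hx hv).differentiableAt,
    (hasFDerivAt_xb hx hv).differentiableAt, (hasGradientAt_tb_left hx hv).gradient,
    (hasGradientAt_tb_right hx hv).gradient, hasFDerivAt_xb_left hx hv, hasFDerivAt_xb_right hx hv⟩
end
end

section
/- Let n ∈ ℝ² be a unit vector and v ∈ ℝ² with v·n ≠ 0. Then R_n A_{v,n} = ((Qv)⊗(Qv))/(v·n) and A_{v,n} R_n = −((Q R_n v)⊗(Q R_n v))/((R_n v)·n). -/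
noncomputable section

open Matrix Real Set

lemma toE_apply (f : Fin 2 → ℝ) (i : Fin 2) : toE f i = f i := rfl

/-- R_n A_{v,n} = ((Qv)⊗(Qv))/(v·n) and
    A_{v,n} R_n = −((Q R_n v)⊗(Q R_n v))/((R_n v)·n). -/
theorem stmt1 (n v : E) (hn : ‖n‖ = 1) (hv : dot v n ≠ 0) :
    Rmat n * Amat v n = (dot v n)⁻¹ • outer (mulV Qmat v) (mulV Qmat v) ∧
    Amat v n * Rmat n =
      -((dot (mulV (Rmat n) v) n)⁻¹ •
        outer (mulV Qmat (mulV (Rmat n) v)) (mulV Qmat (mulV (Rmat n) v))) := by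
  have hn2 : n 0 * n 0 + n 1 * n 1 = 1 := by
    have := congrArg (· ^ 2) hn
    simp [EuclideanSpace.norm_eq, Fin.sum_univ_two, Real.sq_sqrt, sq,
      add_nonneg, mul_self_nonneg] at this
    linarith [this]
  have h1 : (1 - (dot v n)⁻¹ • outer v n) = (dot v n)⁻¹ • (dot v n • (1 : Matrix (Fin 2) (Fin 2) ℝ) - outer v n) := by
    rw [smul_sub, smul_smul, inv_mul_cancel₀ hv, one_smul]
  have hA : Amat v n = (dot v n)⁻¹ • ((dot v n • (1 : Matrix (Fin 2) (Fin 2) ℝ) + outer n v) *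
      (dot v n • (1 : Matrix (Fin 2) (Fin 2) ℝ) - outer v n)) := by
    rw [Amat, h1, Matrix.mul_smul]
  have hRvn : dot (mulV (Rmat n) v) n = -dot v n := by
    simp only [Rmat, dot, mulV, toE_apply, outer, Matrix.sub_apply, Matrix.smul_apply,
      Matrix.one_apply, Matrix.of_apply]
    simp
    linear_combination (-2 * (v 0 * n 0) - 2 * (v 1 * n 1)) * hn2
  constructor
  · rw [hA, Matrix.mul_smul]
    congr 1
    ext i j
    fin_cases i <;> fin_cases j <;>
      simp only [dot, Rmat, Qmat, outer, mulV, toE_apply, Matrix.mul_apply, Fin.sum_univ_two,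
        Matrix.one_apply, Matrix.smul_apply, Matrix.sub_apply, Matrix.add_apply,
        Matrix.of_apply, Matrix.cons_val_zero, Matrix.cons_val_one, Matrix.head_cons,
        Matrix.head_fin_const, smul_eq_mul, Fin.isValue, Fin.zero_eta, Fin.mk_one,
        if_true, if_false, one_ne_zero, zero_ne_one, ite_true, ite_false]
    · linear_combination (v 1^2 - 2*n 0*n 1*v 0*v 1 + 2*n 0^2*v 1^2) * hn2
    · linear_combination (-(v 0*v 1) + 2*n 0*n 1*v 0^2 - 2*n 0^2*v 0*v 1) * hn2
    · linear_combination (-(v 0*v 1) - 2*n 1^2*v 0*v 1 + 2*n 0*n 1*v 1^2) * hn2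
    · linear_combination (v 0^2 + 2*n 1^2*v 0^2 - 2*n 0*n 1*v 0*v 1) * hn2
  · rw [hA, hRvn, inv_neg, neg_smul, neg_neg, Matrix.smul_mul]
    congr 1
    ext i j
    fin_cases i <;> fin_cases j <;>
      simp only [dot, Rmat, Qmat, outer, mulV, toE_apply, Matrix.mul_apply, Fin.sum_univ_two,
        Matrix.one_apply, Matrix.smul_apply, Matrix.sub_apply, Matrix.add_apply,
        Matrix.of_apply, Matrix.cons_val_zero, Matrix.cons_val_one, Matrix.head_cons,
        Matrix.head_fin_const, smul_eq_mul, Fin.isValue, Fin.zero_eta, Fin.mk_one,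
        if_true, if_false, one_ne_zero, zero_ne_one, ite_true, ite_false]
    · linear_combination (v 1^2 - 4*n 1^2*v 1^2 - 6*n 0*n 1*v 0*v 1 + 2*n 0^2*v 1^2) * hn2
    · linear_combination (-(v 0*v 1) + 2*n 1^2*v 0*v 1 + 2*n 0*n 1*v 1^2 + 4*n 0*n 1*v 0^2) * hn2
    · linear_combination (-(v 0*v 1) + 4*n 0*n 1*v 1^2 + 2*n 0*n 1*v 0^2 + 2*n 0^2*v 0*v 1) * hn2
    · linear_combination (v 0^2 + 2*n 1^2*v 0^2 - 6*n 0*n 1*v 0*v 1 - 4*n 0^2*v 0^2) * hn2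
end
end

section
/- Let f₀ : ℝ² × ℝ² → ℝ be continuously differentiable on (closed unit disk) × ℝ² and satisfy the specular boundary condition f₀(x,v) = f₀(x, R_x v) for all x with |x| = 1 and all v ∈ ℝ². If for every (x,v) ∈ γ₋ one has ∇_x f₀(x,v) = ∇_x f₀(x, R_x v) R_x − 2 ∇_v f₀(x, R_x v) A_{v,x}, then the same identity holds for every (x,v) ∈ γ₊. -/
noncomputable section

open Matrix Real Set

/-- The phase space (closed unit disk) × ℝ². -/
def S : Set (E × E) := {p : E × E | ‖p.1‖ ≤ 1}

/-- The gradient in x of f₀ within (closed unit disk) × ℝ², as a row vector. -/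
def gradx (f : E × E → ℝ) (x v : E) : E :=
  toE fun i => fderivWithin ℝ f S (x, v) (EuclideanSpace.single i 1, 0)

/-- The gradient in v of f₀ within (closed unit disk) × ℝ², as a row vector. -/
def gradv (f : E × E → ℝ) (x v : E) : E :=
  toE fun i => fderivWithin ℝ f S (x, v) (0, EuclideanSpace.single i 1)


/-! Put `w = R_x v`; for `(x, v) ∈ γ₊` the point `(x, w)` lies in `γ₋`, and `R_x w = v`.
The hypothesis at `(x, w)`, multiplied on the right by `R_x` (with `R_x² = I`), expresses
`∇ₓf₀(x, v)` through `∇ₓf₀(x, w) R_x` and `∇ᵥf₀(x, v) A_{w,x} R_x`. Differentiating the boundary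
condition in `v` gives `∇ᵥf₀(x, v) = ∇ᵥf₀(x, w) R_x`, and the conjugation identity
`R_x A_{R_x v, x} R_x = -A_{v, x}` finishes the computation. That identity follows from
`A_{v,n} = (v·n) I + n⊗v - v⊗n - (|v|² / (v·n)) n⊗n`, `R (a⊗b) R = (R a)⊗(R b)`, `R_x x = -x`,
`(R_x v)·x = -(v·x)` and `|R_x v| = |v|`. -/

lemma dot_self_eq_one_of_norm_eq_one {x : E} (hx : ‖x‖ = 1) : dot x x = 1 := by
  have h : ‖x‖ ^ 2 = 1 := by rw [hx, one_pow]
  rw [EuclideanSpace.norm_sq_eq, Fin.sum_univ_two] at h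
  simpa [dot, Real.norm_eq_abs, sq_abs, sq] using h

lemma outer_mul_outer (a b c d : E) : outer a b * outer c d = dot b c • outer a d := by
  ext i j
  simp [outer, Matrix.mul_apply, dot]
  ring

lemma outer_neg_left (a b : E) : outer (-a) b = -outer a b := by
  ext i j; simp [outer]

lemma outer_neg_right (a b : E) : outer a (-b) = -outer a b := by
  ext i j; simp [outer]

lemma mulV_Rmat (n v : E) : mulV (Rmat n) v = v - (2 * dot v n) • n := by
  ext i
  fin_cases i <;>
    simp [mulV, toE, Rmat, outer, dot, Matrix.one_apply] <;> ring

lemma mulV_Rmat_self {n : E} (hn : dot n n = 1) : mulV (Rmat n) n = -n := by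
  rw [mulV_Rmat, hn, ← sub_eq_zero]
  module

lemma dot_mulV_Rmat {n : E} (hn : dot n n = 1) (v : E) :
    dot (mulV (Rmat n) v) n = -dot v n := by
  simp only [mulV_Rmat, dot, PiLp.sub_apply, PiLp.smul_apply, smul_eq_mul] at hn ⊢
  linear_combination (-2 * (v 0 * n 0 + v 1 * n 1)) * hn

lemma dot_mulV_Rmat_mulV_Rmat {n : E} (hn : dot n n = 1) (v : E) :
    dot (mulV (Rmat n) v) (mulV (Rmat n) v) = dot v v := by
  simp only [mulV_Rmat, dot, PiLp.sub_apply, PiLp.smul_apply, smul_eq_mul] at hn ⊢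
  linear_combination (4 * (v 0 * n 0 + v 1 * n 1) ^ 2) * hn

lemma mulV_Rmat_mulV_Rmat {n : E} (hn : dot n n = 1) (v : E) :
    mulV (Rmat n) (mulV (Rmat n) v) = v := by
  rw [mulV_Rmat n (mulV _ v), dot_mulV_Rmat hn, mulV_Rmat, ← sub_eq_zero]
  module

lemma Rmat_mul_Rmat {n : E} (hn : dot n n = 1) : Rmat n * Rmat n = 1 := by
  simp only [Rmat, sub_mul, mul_sub, one_mul, mul_one, smul_mul_assoc, mul_smul_comm,
    outer_mul_outer, hn, one_smul]
  module

lemma Rmat_mul_outer_mul_Rmat (n a b : E) :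
    Rmat n * outer a b * Rmat n = outer (mulV (Rmat n) a) (mulV (Rmat n) b) := by
  ext i j
  fin_cases i <;> fin_cases j <;>
    simp [Rmat, Matrix.mul_apply, outer, Matrix.one_apply, mulV, toE] <;> ring

lemma Amat_eq (v n : E) (h : dot v n ≠ 0) :
    Amat v n = dot v n • (1 : Matrix (Fin 2) (Fin 2) ℝ) + outer n v - outer v n
      - ((dot v n)⁻¹ * dot v v) • outer n n := by
  simp only [Amat, mul_sub, mul_one, add_mul, mul_smul_comm, smul_mul_assoc, one_mul,
    outer_mul_outer]
  match_scalars <;> field_simp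

/-- The whole fibre `{x} × ℝ²` lies in `S`, so the derivative within `S` restricts to an honest
derivative in `v`. -/
lemma hasFDerivAt_slice {f : E × E → ℝ} {x v : E} (hx : ‖x‖ ≤ 1)
    (hf : DifferentiableWithinAt ℝ f S (x, v)) :
    HasFDerivAt (fun u => f (x, u))
      ((fderivWithin ℝ f S (x, v)).comp (ContinuousLinearMap.inr ℝ E E)) v :=
  hf.hasFDerivWithinAt.comp_hasFDerivAt (f := fun u => (x, u)) v
    (hasFDerivAt_prodMk_right x v) (.of_forall fun _ => hx)

lemma toCLM_apply (M : Matrix (Fin 2) (Fin 2) ℝ) (u : E) : toCLM M u = mulV M u := by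
  ext i
  simp [toCLM, Matrix.toEuclideanLin, Matrix.mulVec, dotProduct, Fin.sum_univ_two, mulV, toE]

lemma zero_prod_mulV_single (M : Matrix (Fin 2) (Fin 2) ℝ) (j : Fin 2) :
    ((0 : E), mulV M (EuclideanSpace.single j 1)) =
      M 0 j • ((0 : E), EuclideanSpace.single 0 1) +
        M 1 j • ((0 : E), EuclideanSpace.single 1 1) := by
  ext i <;> fin_cases i <;> fin_cases j <;> simp [mulV, toE]

lemma gradv_eq_vMulM_of_invariant {f : E × E → ℝ} (M : Matrix (Fin 2) (Fin 2) ℝ) {x v : E}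
    (hx : ‖x‖ ≤ 1) (hfv : DifferentiableWithinAt ℝ f S (x, v))
    (hfMv : DifferentiableWithinAt ℝ f S (x, mulV M v))
    (hinv : ∀ u, f (x, u) = f (x, mulV M u)) :
    gradv f x v = vMulM (gradv f x (mulV M v)) M := by
  set D := fderivWithin ℝ f S (x, v)
  set D' := fderivWithin ℝ f S (x, mulV M v)
  have hslice : (fun u => f (x, u)) = (fun u => f (x, u)) ∘ toCLM M :=
    funext fun u => by rw [Function.comp_apply, toCLM_apply, ← hinv]
  have hchain : HasFDerivAt (fun u => f (x, u))
      ((D'.comp (ContinuousLinearMap.inr ℝ E E)).comp (toCLM M)) v := by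
    rw [hslice]
    refine HasFDerivAt.comp v ?_ (toCLM M).hasFDerivAt
    rw [toCLM_apply]
    exact hasFDerivAt_slice hx hfMv
  have hD := (hasFDerivAt_slice hx hfv).unique hchain
  ext j
  have hj : D (0, EuclideanSpace.single j 1) = D' (0, mulV M (EuclideanSpace.single j 1)) := by
    simpa [toCLM_apply] using congr($hD (EuclideanSpace.single j 1))
  simp only [gradv, vMulM, toE, WithLp.equiv_symm_apply, PiLp.toLp_apply]
  rw [hj, zero_prod_mulV_single, map_add, map_smul, map_smul, smul_eq_mul, smul_eq_mul]
  ring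

lemma Rmat_mul_Amat_mul_Rmat {n v : E} (hn : dot n n = 1) (hv : dot v n ≠ 0) :
    Rmat n * Amat (mulV (Rmat n) v) n * Rmat n = -Amat v n := by
  have hRv : dot (mulV (Rmat n) v) n ≠ 0 := by rwa [dot_mulV_Rmat hn, neg_ne_zero]
  rw [Amat_eq _ _ hRv, Amat_eq v n hv, dot_mulV_Rmat hn, dot_mulV_Rmat_mulV_Rmat hn]
  simp only [mul_add, mul_sub, add_mul, sub_mul, mul_smul_comm, smul_mul_assoc, mul_one,
    Rmat_mul_Rmat hn, Rmat_mul_outer_mul_Rmat, mulV_Rmat_self hn, mulV_Rmat_mulV_Rmat hn,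
    outer_neg_left, outer_neg_right, neg_neg]
  match_scalars <;> field_simp

lemma vMulM_mul (a : E) (M N : Matrix (Fin 2) (Fin 2) ℝ) :
    vMulM (vMulM a M) N = vMulM a (M * N) := by
  ext j
  simp [vMulM, toE, Matrix.mul_apply, Fin.sum_univ_two]
  ring

lemma vMulM_one (a : E) : vMulM a 1 = a := by
  ext j
  fin_cases j <;> simp [vMulM, toE, Matrix.one_apply]

lemma vMulM_sub (a b : E) (M : Matrix (Fin 2) (Fin 2) ℝ) :
    vMulM (a - b) M = vMulM a M - vMulM b M := by
  ext j
  simp [vMulM, toE]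
  ring

lemma vMulM_smul (c : ℝ) (a : E) (M : Matrix (Fin 2) (Fin 2) ℝ) :
    vMulM (c • a) M = c • vMulM a M := by
  ext j
  simp [vMulM, toE]
  ring

lemma vMulM_neg (a : E) (M : Matrix (Fin 2) (Fin 2) ℝ) : vMulM a (-M) = -vMulM a M := by
  ext j
  simp [vMulM, toE]
  ring

/-- the C¹ compatibility condition on γ₋ implies the same identity on γ₊. -/
theorem stmt5 (f₀ : E × E → ℝ)
    (hf : ContDiffOn ℝ 1 f₀ S)
    (hbc : ∀ x v : E, ‖x‖ = 1 → f₀ (x, v) = f₀ (x, mulV (Rmat x) v))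
    (hcomp : ∀ x v : E, ‖x‖ = 1 → dot v x < 0 →
      gradx f₀ x v =
        vMulM (gradx f₀ x (mulV (Rmat x) v)) (Rmat x) -
          (2 : ℝ) • vMulM (gradv f₀ x (mulV (Rmat x) v)) (Amat v x)) :
    ∀ x v : E, ‖x‖ = 1 → 0 < dot v x →
      gradx f₀ x v =
        vMulM (gradx f₀ x (mulV (Rmat x) v)) (Rmat x) -
          (2 : ℝ) • vMulM (gradv f₀ x (mulV (Rmat x) v)) (Amat v x) := by
  intro x v hx hv
  have hxx := dot_self_eq_one_of_norm_eq_one hx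
  have hdiff : ∀ u, DifferentiableWithinAt ℝ f₀ S (x, u) :=
    fun _ => hf.differentiableOn one_ne_zero _ hx.le
  have hreflected := hcomp x (mulV (Rmat x) v) hx (by rw [dot_mulV_Rmat hxx]; linarith)
  rw [mulV_Rmat_mulV_Rmat hxx] at hreflected
  have hgradv : gradv f₀ x v = vMulM (gradv f₀ x (mulV (Rmat x) v)) (Rmat x) :=
    gradv_eq_vMulM_of_invariant _ hx.le (hdiff _) (hdiff _) (hbc x · hx)
  rw [hreflected, vMulM_sub, vMulM_smul, vMulM_mul, vMulM_mul, Rmat_mul_Rmat hxx, vMulM_one,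
    hgradv, vMulM_mul, ← mul_assoc, Rmat_mul_Amat_mul_Rmat hxx hv.ne', vMulM_neg, smul_neg,
    sub_neg_eq_add, add_sub_cancel_right]
end
end

section
/- Let x lie in the open unit disk of ℝ² and v ∈ ℝ², v ≠ 0, and write x_b = x_b(x,v), t_b = t_b(x,v). Then every entry of the matrix I − (v⊗x_b)/(v·x_b) (which equals ∇_x x_b) has absolute value at most 2|v|/|v·x_b|, and every entry of the matrix t_b·(I − (v⊗x_b)/(v·x_b)) (whose negative equals ∇_v x_b) has absolute value at most 4/|v|. -/
noncomputable section

open Matrix Real Set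

private lemma norm_sq_eq' (y : E) : ‖y‖ ^ 2 = y 0 ^ 2 + y 1 ^ 2 := by
  rw [EuclideanSpace.norm_eq, Real.sq_sqrt (by positivity)]
  simp [Fin.sum_univ_two, sq_abs]

private lemma abs_apply_le' (y : E) (i : Fin 2) : |y i| ≤ ‖y‖ := by
  have h2 : (y i) ^ 2 ≤ ‖y‖ ^ 2 := by
    rw [norm_sq_eq' y]
    fin_cases i <;> simp <;> nlinarith [sq_nonneg (y 0), sq_nonneg (y 1)]
  calc |y i| = Real.sqrt ((y i) ^ 2) := (Real.sqrt_sq_eq_abs _).symm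
    _ ≤ Real.sqrt (‖y‖ ^ 2) := Real.sqrt_le_sqrt h2
    _ = ‖y‖ := Real.sqrt_sq (norm_nonneg y)

private lemma tb_facts (x v : E) (hx : ‖x‖ < 1) (hv : v ≠ 0) :
    0 < tb x v ∧ ‖x - tb x v • v‖ = 1 := by
  have hvn : 0 < ‖v‖ := norm_pos_iff.mpr hv
  set S := {s : ℝ | 0 ≤ s ∧ ‖x - s • v‖ ≤ 1} with hS
  have h0 : (0 : ℝ) ∈ S := ⟨le_refl 0, by simpa using hx.le⟩
  have hbdd : BddAbove S := by
    refine ⟨2 / ‖v‖, fun s hs => ?_⟩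
    obtain ⟨hs0, hs1⟩ := hs
    have h1 : ‖s • v‖ - ‖x‖ ≤ ‖x - s • v‖ := by
      have := norm_sub_norm_le (s • v) x
      rwa [norm_sub_rev] at this
    have h2 : ‖s • v‖ = s * ‖v‖ := by
      rw [norm_smul, Real.norm_eq_abs, abs_of_nonneg hs0]
    rw [le_div_iff₀ hvn]
    nlinarith
  have hclosed : IsClosed S := by
    have : S = {s : ℝ | 0 ≤ s} ∩ {s : ℝ | ‖x - s • v‖ ≤ 1} := rfl
    rw [this]
    refine (isClosed_le continuous_const continuous_id).inter ?_
    exact isClosed_le (by fun_prop) continuous_const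
  have hmem : tb x v ∈ S := hclosed.csSup_mem ⟨0, h0⟩ hbdd
  have htpos : 0 < tb x v := by
    set ε : ℝ := (1 - ‖x‖) / ‖v‖ with hε
    have hεpos : 0 < ε := div_pos (by linarith) hvn
    have hεS : ε ∈ S := by
      refine ⟨hεpos.le, ?_⟩
      have h1 : ‖x - ε • v‖ ≤ ‖x‖ + ‖ε • v‖ := norm_sub_le _ _
      have h2 : ‖ε • v‖ = ε * ‖v‖ := by
        rw [norm_smul, Real.norm_eq_abs, abs_of_nonneg hεpos.le]
      have h3 : ε * ‖v‖ = 1 - ‖x‖ := div_mul_cancel₀ _ hvn.ne'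
      linarith
    exact lt_of_lt_of_le hεpos (le_csSup hbdd hεS)
  refine ⟨htpos, ?_⟩
  by_contra hne
  have hlt : ‖x - tb x v • v‖ < 1 := lt_of_le_of_ne hmem.2 hne
  set δ : ℝ := (1 - ‖x - tb x v • v‖) / ‖v‖ with hδ
  have hδpos : 0 < δ := div_pos (by linarith) hvn
  have hmem2 : tb x v + δ ∈ S := by
    refine ⟨by linarith [hmem.1], ?_⟩
    have heq : x - (tb x v + δ) • v = (x - tb x v • v) - δ • v := by
      rw [add_smul]; abel
    rw [heq]
    have h1 : ‖(x - tb x v • v) - δ • v‖ ≤ ‖x - tb x v • v‖ + ‖δ • v‖ := norm_sub_le _ _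
    have h2 : ‖δ • v‖ = δ * ‖v‖ := by
      rw [norm_smul, Real.norm_eq_abs, abs_of_nonneg hδpos.le]
    have h3 : δ * ‖v‖ = 1 - ‖x - tb x v • v‖ := div_mul_cancel₀ _ hvn.ne'
    linarith
  have h4 := le_csSup hbdd hmem2
  have h5 : sSup S = tb x v := rfl
  linarith

set_option maxHeartbeats 1000000 in
/-- entrywise bounds for I − (v⊗x_b)/(v·x_b) and t_b(I − (v⊗x_b)/(v·x_b)). -/
theorem stmt15 (x v : E) (hx : ‖x‖ < 1) (hv : v ≠ 0) :
    (∀ i j : Fin 2,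
      |((1 : Matrix (Fin 2) (Fin 2) ℝ) - (dot v (xb x v))⁻¹ • outer v (xb x v)) i j| ≤
        2 * ‖v‖ / |dot v (xb x v)|) ∧
    (∀ i j : Fin 2,
      |(tb x v • ((1 : Matrix (Fin 2) (Fin 2) ℝ) - (dot v (xb x v))⁻¹ • outer v (xb x v))) i j| ≤
        4 / ‖v‖) := by
  obtain ⟨htpos, hnorm⟩ := tb_facts x v hx hv
  have hvn : 0 < ‖v‖ := norm_pos_iff.mpr hv
  have hwdef0 : xb x v = x - tb x v • v := rfl
  set t := tb x v with ht
  set w := xb x v with hwE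
  clear_value t w
  have hw0 : w 0 = x 0 - t * v 0 := by rw [hwdef0]; simp
  have hw1 : w 1 = x 1 - t * v 1 := by rw [hwdef0]; simp
  have hwnorm : ‖w‖ = 1 := by rw [hwdef0]; exact hnorm
  have hwsq : w 0 ^ 2 + w 1 ^ 2 = 1 := by rw [← norm_sq_eq', hwnorm]; norm_num
  have hxsq : x 0 ^ 2 + x 1 ^ 2 < 1 := by
    have := norm_sq_eq' x
    nlinarith [norm_nonneg x]
  have hvsq : ‖v‖ ^ 2 = v 0 ^ 2 + v 1 ^ 2 := norm_sq_eq' v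
  set d := dot v w with hd
  have hdval : d = v 0 * w 0 + v 1 * w 1 := rfl
  clear_value d
  -- 2 v·x < t ‖v‖²
  have hq : (x 0 - t * v 0) ^ 2 + (x 1 - t * v 1) ^ 2 = 1 := by
    rw [← hw0, ← hw1]; exact hwsq
  have h5 : 0 < t * (t * (v 0 ^ 2 + v 1 ^ 2) - 2 * (v 0 * x 0 + v 1 * x 1)) := by
    nlinarith [hq, hxsq]
  have hkey0 : 2 * (v 0 * x 0 + v 1 * x 1) < t * (v 0 ^ 2 + v 1 ^ 2) := by
    nlinarith [h5, htpos]
  have hdneg : d < 0 := by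
    have hv2 : 0 < v 0 ^ 2 + v 1 ^ 2 := by nlinarith [hvsq]
    rw [hdval, hw0, hw1]
    nlinarith [hkey0, mul_pos htpos hv2]
  have habsd : |d| = -d := abs_of_neg hdneg
  have hD : 0 < |d| := abs_pos.mpr hdneg.ne
  -- Cauchy-Schwarz : |d| ≤ ‖v‖
  have hdle : |d| ≤ ‖v‖ := by
    have hcs : d ^ 2 ≤ ‖v‖ ^ 2 := by
      rw [hdval, hvsq]
      nlinarith [sq_nonneg (v 0 * w 1 - v 1 * w 0), hwsq]
    nlinarith [sq_abs d, abs_nonneg d]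
  -- t ‖v‖² ≤ 2 |d|
  have hkey : t * ‖v‖ ^ 2 ≤ 2 * |d| := by
    rw [habsd, hdval, hw0, hw1, hvsq]; nlinarith
  have entry : ∀ δ a b : ℝ, |δ| ≤ 1 → |a| ≤ ‖v‖ → |b| ≤ 1 →
      |δ - d⁻¹ * (a * b)| ≤ 2 * ‖v‖ / |d| := by
    intro δ a b hδ ha hb
    rw [le_div_iff₀ hD]
    have h1 : |δ - d⁻¹ * (a * b)| * |d| = |δ * d - a * b| := by
      rw [← abs_mul]
      congr 1
      field_simp [hdneg.ne]
    rw [h1]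
    calc |δ * d - a * b| ≤ |δ * d| + |a * b| := abs_sub _ _
      _ = |δ| * |d| + |a| * |b| := by rw [abs_mul, abs_mul]
      _ ≤ 1 * |d| + ‖v‖ * 1 := by
          gcongr
      _ ≤ 2 * ‖v‖ := by linarith
  have habsv : ∀ i : Fin 2, |v i| ≤ ‖v‖ := abs_apply_le' v
  have habsw : ∀ i : Fin 2, |w i| ≤ 1 := fun i => by
    have := abs_apply_le' w i; rwa [hwnorm] at this
  have Mentry : ∀ i j : Fin 2,
      ((1 : Matrix (Fin 2) (Fin 2) ℝ) - d⁻¹ • outer v w) i j =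
        (if i = j then (1:ℝ) else 0) - d⁻¹ * (v i * w j) := by
    intro i j
    simp [Matrix.sub_apply, Matrix.smul_apply, Matrix.one_apply, outer, smul_eq_mul]
  have main1 : ∀ i j : Fin 2,
      |((1 : Matrix (Fin 2) (Fin 2) ℝ) - d⁻¹ • outer v w) i j| ≤ 2 * ‖v‖ / |d| := by
    intro i j
    rw [Mentry i j]
    refine entry _ _ _ ?_ (habsv i) (habsw j)
    split <;> simp
  refine ⟨main1, ?_⟩
  intro i j
  have h2 : (t • ((1 : Matrix (Fin 2) (Fin 2) ℝ) - d⁻¹ • outer v w)) i j =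
      t * ((1 : Matrix (Fin 2) (Fin 2) ℝ) - d⁻¹ • outer v w) i j := rfl
  rw [h2, abs_mul, abs_of_nonneg htpos.le]
  calc t * |((1 : Matrix (Fin 2) (Fin 2) ℝ) - d⁻¹ • outer v w) i j|
      ≤ t * (2 * ‖v‖ / |d|) := by
        exact mul_le_mul_of_nonneg_left (main1 i j) htpos.le
    _ = (2 * t * ‖v‖) / |d| := by ring
    _ ≤ 4 / ‖v‖ := by
        rw [div_le_div_iff₀ hD hvn]
        nlinarith
end
end
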